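/- arXiv:1502.04809 — 3 statements merged into one kernel-verified Lean document; each statement's English description precedes it below -/
import Mathlib

section
/- Let σ : [0,∞) → [0,∞) be a class L function (continuous, strictly decreasing, σ(t) → 0 as t → ∞). Define σ†(s) = σ⁻¹(s) for s ∈ (0, σ(0)] and σ†(s) = 0 for s ≥ σ(0), and define φ(s) = s·exp(-σ†(s)) for s > 0 with φ(0) = 0. Then φ is a class K∞ function. -/
/-! The generalized inverse `σ†(s) = inf {t ≥ 0 | σ t ≤ s}` of a strictly decreasing `σ` tending
to `0` is nonnegative, antitone and continuous on `(0, ∞)`; it is continuous because `σ` is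
strictly decreasing, so that a jump of `σ` only makes `σ†` flat. Then `s ↦ s · exp (-σ†(s))` is
the strictly increasing `s` times a positive nondecreasing factor bounded by `1`, hence strictly
increasing, continuous, squeezed to `0` at `0`, and at least `s · exp (-σ†(1))` for `s ≥ 1`. -/

open Set Filter

def IsClassKInf (α : ℝ → ℝ) : Prop :=
  ContinuousOn α (Ici 0) ∧ StrictMonoOn α (Ici 0) ∧ α 0 = 0 ∧ (∀ s ∈ Ici (0:ℝ), 0 ≤ α s) ∧
    Tendsto α atTop atTop

open Topology Real

noncomputable def pseudoInv (σ : ℝ → ℝ) (s : ℝ) : ℝ :=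
  sInf {t : ℝ | 0 ≤ t ∧ σ t ≤ s}

section PseudoInv

variable {σ : ℝ → ℝ} {s t : ℝ}

lemma pseudoInv_nonneg (σ : ℝ → ℝ) (s : ℝ) : 0 ≤ pseudoInv σ s :=
  Real.sInf_nonneg fun _ ht => ht.1

lemma bddBelow_pseudoInv_set (σ : ℝ → ℝ) (s : ℝ) : BddBelow {t : ℝ | 0 ≤ t ∧ σ t ≤ s} :=
  ⟨0, fun _ ht => ht.1⟩

lemma pseudoInv_le (ht : 0 ≤ t) (hts : σ t ≤ s) : pseudoInv σ s ≤ t :=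
  csInf_le (bddBelow_pseudoInv_set σ s) ⟨ht, hts⟩

lemma pseudoInv_set_nonempty (hlim : Tendsto σ atTop (𝓝 0)) (hs : 0 < s) :
    {t : ℝ | 0 ≤ t ∧ σ t ≤ s}.Nonempty := by
  obtain ⟨t, hσt, ht⟩ := ((hlim.eventually_lt_const hs).and (eventually_ge_atTop 0)).exists
  exact ⟨t, ht, hσt.le⟩

lemma le_pseudoInv (hanti : StrictAntiOn σ (Ici 0)) (hlim : Tendsto σ atTop (𝓝 0))
    (ht : 0 ≤ t) (hs : 0 < s) (hst : s < σ t) : t ≤ pseudoInv σ s :=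
  le_csInf (pseudoInv_set_nonempty hlim hs) fun _ ⟨hu, hus⟩ =>
    (hanti.le_iff_ge hu ht).1 (hus.trans hst.le)

lemma lt_of_pseudoInv_lt (hanti : StrictAntiOn σ (Ici 0)) (hlim : Tendsto σ atTop (𝓝 0))
    (ht : 0 ≤ t) (hs : 0 < s) (hst : pseudoInv σ s < t) : σ t < s := by
  obtain ⟨u, ⟨hu, hus⟩, hut⟩ := exists_lt_of_csInf_lt (pseudoInv_set_nonempty hlim hs) hst
  exact (hanti hu ht hut).trans_le hus

lemma antitoneOn_pseudoInv (hlim : Tendsto σ atTop (𝓝 0)) : AntitoneOn (pseudoInv σ) (Ioi 0) :=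
  fun _ ha _ _ hab => csInf_le_csInf (bddBelow_pseudoInv_set σ _) (pseudoInv_set_nonempty hlim ha)
    fun _ ⟨ht, hts⟩ => ⟨ht, hts.trans hab⟩

lemma continuousAt_pseudoInv (hanti : StrictAntiOn σ (Ici 0)) (hlim : Tendsto σ atTop (𝓝 0))
    {a : ℝ} (ha : 0 < a) : ContinuousAt (pseudoInv σ) a := by
  refine tendsto_order.2 ⟨fun b hb => ?_, fun b hb => ?_⟩
  · rcases lt_or_ge b 0 with hb0 | hb0
    · exact Eventually.of_forall fun s => hb0.trans_le (pseudoInv_nonneg σ s)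
    obtain ⟨t, hbt, hta⟩ := exists_between hb
    have ht : 0 ≤ t := hb0.trans hbt.le
    have hat : a < σ t := lt_of_not_ge fun hσt => (pseudoInv_le ht hσt).not_gt hta
    filter_upwards [Ioo_mem_nhds ha hat] with s ⟨hs, hst⟩
    exact hbt.trans_le (le_pseudoInv hanti hlim ht hs hst)
  · obtain ⟨t, hat, htb⟩ := exists_between hb
    have ht : 0 ≤ t := (pseudoInv_nonneg σ a).trans hat.le
    filter_upwards [Ioi_mem_nhds (lt_of_pseudoInv_lt hanti hlim ht ha hat)] with s hs
    exact (pseudoInv_le ht hs.le).trans_lt htb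

end PseudoInv

lemma isClassKInf_mul_exp_neg {ψ : ℝ → ℝ} (hψ_nonneg : ∀ s ∈ Ici (0 : ℝ), 0 ≤ ψ s)
    (hψ_anti : AntitoneOn ψ (Ioi 0)) (hψ_cont : ContinuousOn ψ (Ioi 0)) :
    IsClassKInf (fun s => s * exp (-ψ s)) := by
  have hle_self : ∀ s ∈ Ici (0 : ℝ), s * exp (-ψ s) ≤ s := fun s hs =>
    mul_le_of_le_one_right hs (exp_le_one_iff.2 (neg_nonpos.2 (hψ_nonneg s hs)))
  have hnonneg : ∀ s ∈ Ici (0 : ℝ), 0 ≤ s * exp (-ψ s) := fun s hs =>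
    mul_nonneg hs (exp_pos _).le
  refine ⟨?_, ?_, zero_mul _, hnonneg, ?_⟩
  · intro s hs
    rcases (mem_Ici.1 hs).eq_or_lt with rfl | hpos
    · have h : Tendsto (fun s => s * exp (-ψ s)) (𝓝[≥] 0) (𝓝 0) :=
        squeeze_zero' (eventually_nhdsWithin_of_forall hnonneg)
          (eventually_nhdsWithin_of_forall hle_self) continuousWithinAt_id
      simpa [ContinuousWithinAt] using h
    · have := hψ_cont.continuousAt (Ioi_mem_nhds hpos)
      exact ContinuousAt.continuousWithinAt (by fun_prop)
  · intro a ha b hb hab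
    rcases (mem_Ici.1 ha).eq_or_lt with rfl | hpos
    · simpa using mul_pos hab (exp_pos (-ψ b))
    calc a * exp (-ψ a) ≤ a * exp (-ψ b) := by
          gcongr
          exact hψ_anti hpos (hpos.trans hab) hab.le
      _ < b * exp (-ψ b) := mul_lt_mul_of_pos_right hab (exp_pos _)
  · refine tendsto_atTop_mono' atTop ?_ (tendsto_id.atTop_mul_const (exp_pos (-ψ 1)))
    filter_upwards [eventually_ge_atTop 1] with s hs
    change s * exp (-ψ 1) ≤ s * exp (-ψ s)
    gcongr
    exact hψ_anti (mem_Ioi.2 one_pos) (one_pos.trans_le hs) hs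

theorem scaling_from_classL_is_classKInf_general (σ : ℝ → ℝ)
    (hanti : StrictAntiOn σ (Ici 0))
    (hlim : Tendsto σ atTop (nhds 0)) :
    IsClassKInf (fun s => s * Real.exp (-(sInf {t : ℝ | 0 ≤ t ∧ σ t ≤ s}))) :=
  isClassKInf_mul_exp_neg (fun s _ => pseudoInv_nonneg σ s) (antitoneOn_pseudoInv hlim)
    fun _ ha => (continuousAt_pseudoInv hanti hlim ha).continuousWithinAt

/-- Given a class L function `σ`, define `σ†(s) = σ⁻¹(s)` for `s ∈ (0, σ(0)]` and
`σ†(s) = 0` for `s ≥ σ(0)` (realized as `σ†(s) = inf {t ≥ 0 : σ(t) ≤ s}`), and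
`φ(s) = s·exp(-σ†(s))` (so `φ(0) = 0`).  Then `φ` is class K∞. -/
theorem scaling_from_classL_is_classKInf (σ : ℝ → ℝ)
    (hcont : ContinuousOn σ (Ici 0)) (hanti : StrictAntiOn σ (Ici 0))
    (hnonneg : ∀ t ∈ Ici (0:ℝ), 0 ≤ σ t) (hlim : Tendsto σ atTop (nhds 0)) :
    IsClassKInf (fun s => s * Real.exp (-(sInf {t : ℝ | 0 ≤ t ∧ σ t ≤ s}))) :=
  scaling_from_classL_is_classKInf_general σ hanti hlim
end

section
/- For the differential inclusion x' ∈ closed unit ball of ℝ², with A the unit circle {x ∈ ℝ² : |x| = 1}, there is no continuously differentiable function V : ℝ² → [0,∞) together with class K∞ functions α₁, α₂ satisfying α₁(d(x,A)) ≤ V(x) ≤ α₂(d(x,A)) for all x and min_{|w| ≤ 1} ⟨∇V(x), w⟩ ≤ -V(x) for all x. -/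
open Set Filter

/-!
A weak Lyapunov function `V` for the unit circle vanishes on the circle and is positive at the
origin, so its maximum over the closed unit disk is positive and attained at an interior point.
There `V` is critical, and the decrease condition `⟪∇V(x), w⟫ ≤ -V(x)` forces `V(x) ≤ 0`.
-/

open Metric

theorem IsClassKInf.pos {α : ℝ → ℝ} (hα : IsClassKInf α) {s : ℝ} (hs : 0 < s) : 0 < α s := by
  have h := hα.2.1 (self_mem_Ici : (0 : ℝ) ∈ Ici 0) hs.le hs
  rwa [hα.2.2.1] at h

theorem IsClassKInf.map_infDist_of_mem {α : ℝ → ℝ} (hα : IsClassKInf α) {E : Type*}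
    [PseudoMetricSpace E] {s : Set E} {x : E} (hx : x ∈ s) : α (infDist x s) = 0 := by
  rw [infDist_zero_of_mem hx, hα.2.2.1]

theorem exists_isLocalMax_mem_ball_of_lt_center {E β : Type*} [PseudoMetricSpace E]
    [ProperSpace E] [LinearOrder β] [TopologicalSpace β] [ClosedIciTopology β] {f : E → β}
    {c : E} {r : ℝ} (hr : 0 ≤ r) (hf : ContinuousOn f (closedBall c r))
    (hsphere : ∀ y ∈ sphere c r, f y < f c) :
    ∃ x ∈ ball c r, IsLocalMax f x ∧ f c ≤ f x := by
  obtain ⟨x, hx, hmax⟩ := (isCompact_closedBall c r).exists_isMaxOn_mem_subset hf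
    (mem_closedBall_self hr) (s := ball c r) fun y hy ↦
      hsphere y (by rwa [closedBall_sdiff_ball] at hy)
  exact ⟨x, hx,
    hmax.isLocalMax (mem_of_superset (isOpen_ball.mem_nhds hx) ball_subset_closedBall),
    hmax (mem_closedBall_self hr)⟩

/-- For the differential inclusion `x' ∈ closed unit ball` in `ℝ²`, with `A` the unit
circle, there is no continuously differentiable weak Lyapunov function for `A`: no C¹
function `V : ℝ² → [0,∞)` with `α₁(d(x,A)) ≤ V(x) ≤ α₂(d(x,A))` for class K∞ `α₁,α₂` and
`min_{‖w‖ ≤ 1} ⟨∇V(x), w⟩ ≤ -V(x)` for all `x`. -/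
theorem no_smooth_weak_lyapunov_for_circle :
    ¬ ∃ (V : EuclideanSpace ℝ (Fin 2) → ℝ) (α₁ α₂ : ℝ → ℝ),
      ContDiff ℝ 1 V ∧ (∀ x, 0 ≤ V x) ∧ IsClassKInf α₁ ∧ IsClassKInf α₂ ∧
      (∀ x, α₁ (Metric.infDist x (Metric.sphere (0 : EuclideanSpace ℝ (Fin 2)) 1)) ≤ V x ∧
            V x ≤ α₂ (Metric.infDist x (Metric.sphere (0 : EuclideanSpace ℝ (Fin 2)) 1))) ∧
      (∀ x, ∃ w : EuclideanSpace ℝ (Fin 2), ‖w‖ ≤ 1 ∧ fderiv ℝ V x w ≤ -V x) := by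
  rintro ⟨V, α₁, α₂, hV, -, hα₁, hα₂, hbound, hdec⟩
  set A := sphere (0 : EuclideanSpace ℝ (Fin 2)) 1
  have hV_circle : ∀ y ∈ A, V y ≤ 0 := fun y hy ↦
    hα₂.map_infDist_of_mem hy ▸ (hbound y).2
  have hdist_origin : 0 < infDist 0 A := by
    rw [← infDist_pos_iff_notMem_closure (NormedSpace.sphere_nonempty.2 zero_le_one),
      isClosed_sphere.closure_eq]
    simp
  have hV_origin : 0 < V 0 := (hα₁.pos hdist_origin).trans_le (hbound 0).1
  obtain ⟨x, -, hmax, hx⟩ := exists_isLocalMax_mem_ball_of_lt_center zero_le_one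
    hV.continuous.continuousOn fun y hy ↦ (hV_circle y hy).trans_lt hV_origin
  obtain ⟨w, -, hw⟩ := hdec x
  rw [hmax.fderiv_eq_zero, zero_apply] at hw
  linarith
end

section
/- Let V : ℝⁿ × ℝ → ℝ be continuously differentiable, positive definite (there exists class K α₁ with α₁(|x|) ≤ V(x,t) for all x, t) and decrescent (there exists class K α₂ with V(x,t) ≤ α₂(|x|)). Suppose along a solution x : [t₀,∞) → ℝⁿ of x' = f(x,t), d/dt V(x(t),t) ≤ 0 for all t ≥ t₀. Then |x(t)| ≤ α₁⁻¹(α₂(|x(0 at t₀)|)) for all t ≥ t₀, where |x(t₀)| is small enough that α₂(|x(t₀)|) is in the range of α₁; i.e., the origin is uniformly stable. -/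
open Set Filter

/-- A class-K function: continuous, zero at zero, strictly increasing on `[0,∞)` with
nonnegative values there. -/
def IsClassK (α : ℝ → ℝ) : Prop :=
  ContinuousOn α (Ici 0) ∧ StrictMonoOn α (Ici 0) ∧ α 0 = 0 ∧ ∀ s ∈ Ici (0:ℝ), 0 ≤ α s

theorem antitoneOn_Ici_of_deriv_nonpos {g : ℝ → ℝ} {a : ℝ}
    (hg : ∀ t ≥ a, DifferentiableAt ℝ g t) (hg' : ∀ t ≥ a, deriv g t ≤ 0) :
    AntitoneOn g (Ici a) :=
  antitoneOn_of_deriv_nonpos (convex_Ici a)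
    (fun t ht => (hg t ht).continuousAt.continuousWithinAt)
    (fun t ht => (hg t (interior_subset ht)).differentiableWithinAt)
    (fun t ht => hg' t (interior_subset ht))

section Trajectory

variable {E : Type*} [NormedAddCommGroup E] [NormedSpace ℝ E] {V : E → ℝ → ℝ} {x : ℝ → E}

theorem Differentiable.differentiableAt_comp_prodMk_id
    (hV : Differentiable ℝ (fun p : E × ℝ => V p.1 p.2)) {t : ℝ} (hx : DifferentiableAt ℝ x t) :
    DifferentiableAt ℝ (fun s => V (x s) s) t :=
  hV.differentiableAt.comp t (hx.prodMk differentiableAt_id)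

theorem antitoneOn_comp_prodMk_id_of_deriv_nonpos
    (hV : Differentiable ℝ (fun p : E × ℝ => V p.1 p.2)) {t₀ : ℝ}
    (hx : ∀ t ≥ t₀, DifferentiableAt ℝ x t)
    (hdecr : ∀ t ≥ t₀, deriv (fun s => V (x s) s) t ≤ 0) :
    AntitoneOn (fun s => V (x s) s) (Ici t₀) :=
  antitoneOn_Ici_of_deriv_nonpos (fun t ht => hV.differentiableAt_comp_prodMk_id (hx t ht)) hdecr

end Trajectory

theorem lyapunov_uniform_stability_general {n : ℕ}
    (f : EuclideanSpace ℝ (Fin n) → ℝ → EuclideanSpace ℝ (Fin n))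
    (V : EuclideanSpace ℝ (Fin n) → ℝ → ℝ)
    (hV : ContDiff ℝ 1 (fun p : EuclideanSpace ℝ (Fin n) × ℝ => V p.1 p.2))
    (α₁ α₂ : ℝ → ℝ) (hα₁ : IsClassK α₁)
    (hbound : ∀ x t, α₁ ‖x‖ ≤ V x t ∧ V x t ≤ α₂ ‖x‖)
    (t₀ : ℝ) (x : ℝ → EuclideanSpace ℝ (Fin n))
    (hsol : ∀ t ≥ t₀, HasDerivAt x (f (x t) t) t)
    (hdecr : ∀ t ≥ t₀, deriv (fun s => V (x s) s) t ≤ 0) :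
    ∀ s ∈ Ici (0:ℝ), α₁ s = α₂ ‖x t₀‖ → ∀ t ≥ t₀, ‖x t‖ ≤ s := by
  intro s hs hαs t ht
  have hanti : AntitoneOn (fun s => V (x s) s) (Ici t₀) :=
    antitoneOn_comp_prodMk_id_of_deriv_nonpos (hV.differentiable one_ne_zero)
      (fun u hu => (hsol u hu).differentiableAt) hdecr
  have key : α₁ ‖x t‖ ≤ α₁ s :=
    calc α₁ ‖x t‖ ≤ V (x t) t := (hbound (x t) t).1
      _ ≤ V (x t₀) t₀ := hanti self_mem_Ici ht ht
      _ ≤ α₂ ‖x t₀‖ := (hbound (x t₀) t₀).2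
      _ = α₁ s := hαs.symm
  exact (hα₁.2.1.le_iff_le (norm_nonneg _) hs).1 key

/-- Uniform stability via Lyapunov's second method: if `V(x,t)` is continuously
differentiable, positive definite (`α₁(‖x‖) ≤ V(x,t)`) and decrescent
(`V(x,t) ≤ α₂(‖x‖)`) for class K functions `α₁, α₂`, and nonincreasing along a solution
`x` of `x' = f(x,t)`, then `‖x(t)‖ ≤ α₁⁻¹(α₂(‖x(t₀)‖))` for all `t ≥ t₀`, whenever
`α₂(‖x(t₀)‖)` lies in the range of `α₁` (expressed by: whenever `s ≥ 0` satisfies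
`α₁(s) = α₂(‖x(t₀)‖)`, we have `‖x(t)‖ ≤ s`). -/
theorem lyapunov_uniform_stability {n : ℕ}
    (f : EuclideanSpace ℝ (Fin n) → ℝ → EuclideanSpace ℝ (Fin n))
    (hf0 : ∀ t : ℝ, f 0 t = 0)
    (V : EuclideanSpace ℝ (Fin n) → ℝ → ℝ)
    (hV : ContDiff ℝ 1 (fun p : EuclideanSpace ℝ (Fin n) × ℝ => V p.1 p.2))
    (α₁ α₂ : ℝ → ℝ) (hα₁ : IsClassK α₁) (hα₂ : IsClassK α₂)
    (hbound : ∀ x t, α₁ ‖x‖ ≤ V x t ∧ V x t ≤ α₂ ‖x‖)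
    (t₀ : ℝ) (x : ℝ → EuclideanSpace ℝ (Fin n))
    (hsol : ∀ t ≥ t₀, HasDerivAt x (f (x t) t) t)
    (hdecr : ∀ t ≥ t₀, deriv (fun s => V (x s) s) t ≤ 0)
    (hrange : α₂ ‖x t₀‖ ∈ α₁ '' (Ici 0)) :
    ∀ s ∈ Ici (0:ℝ), α₁ s = α₂ ‖x t₀‖ → ∀ t ≥ t₀, ‖x t‖ ≤ s :=
  lyapunov_uniform_stability_general f V hV α₁ α₂ hα₁ hbound t₀ x hsol hdecr
end
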